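/- Suppose 0 < ε < 1/2, r ≥ 2, x ≥ (1+ε)(r+1), 0 < δ < (ε/6r)², and G is an r-graph with exactly C(x,r) edges such that K^r_{r+1}(G) > (1−δ)·C(x,r+1). Then the sum of the degrees d(v) over all vertices v with d(v) < C((1−δ^{1/2})(x−1), r−1) is at most δ^{1/2}·x·C(x−1,r−1). -/

import Mathlib

/-- Generalized binomial coefficient `C(x, k) = x(x-1)⋯(x-k+1)/k!` for real `x`. -/
noncomputable def gchoose (x : ℝ) (k : ℕ) : ℝ :=
  (∏ i ∈ Finset.range k, (x - i)) / (Nat.factorial k)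

/-- `cliqueCount r G m` is the number of `m`-element vertex subsets all of whose
`r`-element subsets are edges of `G` (i.e. the number of copies of `K^r_m` in `G`). -/
def cliqueCount {V : Type*} [Fintype V] [DecidableEq V]
    (r : ℕ) (G : Finset (Finset V)) (m : ℕ) : ℕ :=
  ((Finset.powersetCard m (Finset.univ : Finset V)).filter
    (fun T => ∀ S ∈ Finset.powersetCard r T, S ∈ G)).card

/-- The degree of a vertex: the number of edges of `G` containing `v`. -/
def deg {V : Type*} [Fintype V] [DecidableEq V]
    (G : Finset (Finset V)) (v : V) : ℕ :=
  (G.filter fun e => v ∈ e).card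

/-!
Lovász's form of the Kruskal–Katona theorem: a family of `(k+1)`-sets with at least `C(z, k+1)`
members has at least `C(z, k)` sets in its shadow. Apply it to the link of a vertex `v` in the
family of `(r+1)`-cliques, whose shadow lies in the link of `v` in `G`: if `d(v) = C(y, r-1)`, at
most `C(y, r) = d(v) (y - r + 1) / r` cliques contain `v`. Hence every vertex lies in at most
`d(v) (x - r) / r` cliques (when `d(v) > C(x-1, r-1)` because a clique through `v` minus `v` is an
edge avoiding `v`), and a vertex with `d(v) < C((1-√δ)(x-1), r-1)` in at most
`d(v) (x - r - √δ (x-1)) / r`. Summing over `v`, the total is at most `C(x, r) (x - r) = (r+1)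
C(x, r+1)` minus `√δ (x-1) / r` times the degree sum of the small vertices, and the hypothesis
`K > (1-δ) C(x, r+1)` caps this loss at `δ C(x, r) (x - r)`.
-/

open Finset Polynomial
open scoped FinsetFamily

section GChoose

lemma gchoose_eq_eval_descPochhammer (x : ℝ) (k : ℕ) :
    gchoose x k = (descPochhammer ℝ k).eval x / k.factorial := by
  rw [gchoose, descPochhammer_eval_eq_prod_range]

lemma gchoose_zero (x : ℝ) : gchoose x 0 = 1 := by simp [gchoose]

lemma gchoose_one (x : ℝ) : gchoose x 1 = x := by simp [gchoose]

lemma gchoose_natCast (n k : ℕ) : gchoose n k = n.choose k := by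
  rw [gchoose_eq_eval_descPochhammer, Nat.cast_choose_eq_descPochhammer_div]

lemma gchoose_self (k : ℕ) : gchoose k k = 1 := by
  rw [gchoose_natCast, Nat.choose_self, Nat.cast_one]

lemma gchoose_succ_mul (x : ℝ) (k : ℕ) :
    gchoose x (k + 1) * (k + 1) = gchoose x k * (x - k) := by
  simp only [gchoose_eq_eval_descPochhammer, descPochhammer_succ_eval, Nat.factorial_succ]
  push_cast
  field_simp

lemma gchoose_succ_mul' (x : ℝ) (k : ℕ) :
    gchoose x (k + 1) * (k + 1) = x * gchoose (x - 1) k := by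
  simp only [gchoose_eq_eval_descPochhammer, descPochhammer_succ_left, eval_mul, eval_X,
    eval_comp, eval_sub, eval_one, Nat.factorial_succ]
  push_cast
  field_simp

lemma gchoose_succ_succ (x : ℝ) (k : ℕ) :
    gchoose x (k + 1) = gchoose (x - 1) k + gchoose (x - 1) (k + 1) := by
  have hk : (k : ℝ) + 1 ≠ 0 := by positivity
  apply mul_right_cancel₀ hk
  linear_combination gchoose_succ_mul' x k - gchoose_succ_mul (x - 1) k

lemma gchoose_nonneg {x : ℝ} {k : ℕ} (h : (k : ℝ) - 1 ≤ x) : 0 ≤ gchoose x k := by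
  rw [gchoose_eq_eval_descPochhammer]
  exact div_nonneg (descPochhammer_nonneg h) (by positivity)

lemma gchoose_pos {x : ℝ} {k : ℕ} (h : (k : ℝ) - 1 < x) : 0 < gchoose x k := by
  rw [gchoose_eq_eval_descPochhammer]
  exact div_pos (descPochhammer_pos h) (by positivity)

lemma gchoose_strictMonoOn {k : ℕ} (hk : k ≠ 0) :
    StrictMonoOn (gchoose · k) (Set.Ici ((k : ℝ) - 1)) := by
  obtain ⟨k, rfl⟩ := Nat.exists_eq_succ_of_ne_zero hk
  intro a ha b hb hab
  simp only [Set.mem_Ici, Nat.cast_succ, add_sub_cancel_right] at ha hb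
  simp only [gchoose_eq_eval_descPochhammer, descPochhammer_succ_eval]
  gcongr ?_ / _
  have hk1 : (k : ℝ) - 1 ≤ k := by linarith
  exact mul_lt_mul' (monotoneOn_descPochhammer_eval k (hk1.trans ha) (hk1.trans hb) hab.le)
    (by linarith) (by linarith) (descPochhammer_pos (by linarith))

lemma exists_gchoose_eq {k : ℕ} (hk : k ≠ 0) {d : ℝ} (hd : 1 ≤ d) :
    ∃ y, (k : ℝ) ≤ y ∧ gchoose y k = d := by
  set b : ℝ := k - 1 + k.factorial * d
  have hfac : (1 : ℝ) ≤ k.factorial := by exact_mod_cast k.factorial_pos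
  have hkb : (k : ℝ) ≤ b := by nlinarith
  -- `b` makes the smallest factor `b - k + 1` of the product defining `gchoose b k` equal `k! * d`
  have hdb : d ≤ gchoose b k := by
    rw [gchoose_eq_eval_descPochhammer, le_div_iff₀ (by positivity)]
    calc d * k.factorial = b - k + 1 := by ring
      _ ≤ (b - k + 1) ^ k := le_self_pow₀ (by nlinarith) hk
      _ ≤ _ := pow_le_descPochhammer_eval (by linarith)
  have hcont : ContinuousOn (gchoose · k) (Set.Icc (k : ℝ) b) := by
    simp only [gchoose_eq_eval_descPochhammer]
    fun_prop
  obtain ⟨y, hy, hyd⟩ := intermediate_value_Icc hkb hcont ⟨(gchoose_self k).trans_le hd, hdb⟩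
  exact ⟨y, hy.1, hyd⟩

end GChoose

namespace Finset

variable {α : Type*}

section Shadow

variable [DecidableEq α] {𝒜 : Finset (Finset α)} {a : α}

lemma shadow_memberSubfamily_subset :
    ∂ (𝒜.memberSubfamily a) ⊆ (∂ 𝒜).memberSubfamily a := by
  intro t ht
  obtain ⟨s, hs, b, hb, rfl⟩ := mem_shadow_iff.1 ht
  rw [mem_memberSubfamily] at hs ⊢
  have hba : b ≠ a := ne_of_mem_of_not_mem hb hs.2
  refine ⟨?_, fun h => hs.2 (mem_of_mem_erase h)⟩
  rw [← erase_insert_of_ne hba.symm]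
  exact erase_mem_shadow hs.1 (mem_insert_of_mem hb)

lemma memberSubfamily_subset_nonMemberSubfamily_shadow :
    𝒜.memberSubfamily a ⊆ (∂ 𝒜).nonMemberSubfamily a := by
  intro s hs
  rw [mem_memberSubfamily] at hs
  rw [mem_nonMemberSubfamily, ← erase_insert hs.2]
  exact ⟨erase_mem_shadow hs.1 (mem_insert_self a s), notMem_erase a _⟩

lemma card_memberSubfamily_add_card_shadow_le :
    #(𝒜.memberSubfamily a) + #(∂ (𝒜.memberSubfamily a)) ≤ #(∂ 𝒜) := by
  rw [← card_memberSubfamily_add_card_nonMemberSubfamily a (∂ 𝒜), add_comm]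
  exact add_le_add (card_le_card shadow_memberSubfamily_subset)
    (card_le_card memberSubfamily_subset_nonMemberSubfamily_shadow)

lemma _root_.Set.Sized.memberSubfamily {r : ℕ} (h𝒜 : (𝒜 : Set (Finset α)).Sized (r + 1))
    (a : α) : (𝒜.memberSubfamily a : Set (Finset α)).Sized r := by
  intro s hs
  rw [mem_coe, mem_memberSubfamily] at hs
  have := h𝒜 hs.1
  rw [card_insert_of_notMem hs.2] at this
  omega

lemma shadow_map {β : Type*} [DecidableEq β] (f : α ↪ β) :
    ∂ (𝒜.map (mapEmbedding f).toEmbedding) = (∂ 𝒜).map (mapEmbedding f).toEmbedding := by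
  ext t
  simp only [mem_shadow_iff, mem_map, RelEmbedding.coe_toEmbedding, mapEmbedding_apply]
  constructor
  · rintro ⟨_, ⟨s, hs, rfl⟩, _, hfb, rfl⟩
    obtain ⟨b, hb, rfl⟩ := mem_map.1 hfb
    exact ⟨s.erase b, ⟨s, hs, b, hb, rfl⟩, map_erase f s b⟩
  · rintro ⟨_, ⟨s, hs, b, hb, rfl⟩, rfl⟩
    exact ⟨s.map f, ⟨s, hs, rfl⟩, f b, mem_map_of_mem f hb, (map_erase f s b).symm⟩

end Shadow

namespace Colex

variable [LinearOrder α] {𝒜 : Finset (Finset α)} {r : ℕ}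

lemma IsInitSeg.insert_erase_mem (h𝒜 : IsInitSeg 𝒜 r) {s : Finset α} (hs : s ∈ 𝒜) {a b : α}
    (ha : a ∉ s) (hb : b ∈ s) (hab : a < b) : insert a (s.erase b) ∈ 𝒜 := by
  have ha' : a ∉ s.erase b := fun h => ha (mem_of_mem_erase h)
  refine h𝒜.2 hs ⟨?_, ?_⟩
  · conv_rhs => rw [← insert_erase hb]
    exact (insert_lt_insert ha' (notMem_erase b s)).2 hab
  · rw [card_insert_of_notMem ha', card_erase_add_one hb, h𝒜.1 hs]

lemma IsInitSeg.shadow_nonMemberSubfamily_subset (h𝒜 : IsInitSeg 𝒜 r) {a : α}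
    (ha : ∀ b, a ≤ b) : ∂ (𝒜.nonMemberSubfamily a) ⊆ 𝒜.memberSubfamily a := by
  intro t ht
  obtain ⟨s, hs, b, hb, rfl⟩ := mem_shadow_iff.1 ht
  rw [mem_nonMemberSubfamily] at hs
  have hab : a < b := (ha b).lt_of_ne (ne_of_mem_of_not_mem hb hs.2).symm
  exact mem_memberSubfamily.2 ⟨h𝒜.insert_erase_mem hs.1 hs.2 hb hab,
    fun h => hs.2 (mem_of_mem_erase h)⟩

lemma IsInitSeg.memberSubfamily_nonempty (h𝒜 : IsInitSeg 𝒜 (r + 1)) {a : α} (ha : ∀ b, a ≤ b)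
    (hne : 𝒜.Nonempty) : (𝒜.memberSubfamily a).Nonempty := by
  obtain ⟨s, hs⟩ := hne
  by_cases has : a ∈ s
  · exact ⟨s.erase a, mem_memberSubfamily.2 ⟨by rwa [insert_erase has], notMem_erase a s⟩⟩
  · obtain ⟨b, hb⟩ := card_pos.1 (by rw [h𝒜.1 hs]; omega)
    exact ⟨s.erase b, h𝒜.shadow_nonMemberSubfamily_subset ha
      (erase_mem_shadow (mem_nonMemberSubfamily.2 ⟨hs, has⟩) hb)⟩

lemma exists_isInitSeg_card_eq [Fintype α] {m : ℕ}
    (hm : m ≤ #(powersetCard r (univ : Finset α))) :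
    ∃ 𝒞 : Finset (Finset α), IsInitSeg 𝒞 r ∧ #𝒞 = m := by
  induction m with
  | zero => exact ⟨∅, isInitSeg_empty, card_empty⟩
  | succ m ih =>
    obtain ⟨𝒞, h𝒞, rfl⟩ := ih (by omega)
    have h𝒞sub : 𝒞 ⊆ powersetCard r univ := h𝒞.1.subset_powersetCard_univ
    -- add the colex-least `r`-set not yet in `𝒞`
    obtain ⟨t, ht, hmin⟩ := exists_min_image (powersetCard r univ \ 𝒞) toColex
      (sdiff_nonempty.2 fun h => by have := card_le_card h; omega)
    rw [mem_sdiff, mem_powersetCard] at ht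
    refine ⟨insert t 𝒞, ⟨?_, ?_⟩, card_insert_of_notMem ht.2⟩
    · intro s hs
      rcases mem_insert.1 (mem_coe.1 hs) with rfl | hs
      exacts [ht.1.2, h𝒞.1 hs]
    · rintro s u hs ⟨hus, hu⟩
      refine mem_insert_of_mem (by_contra fun hu𝒞 => ?_)
      rcases mem_insert.1 hs with rfl | hs
      · exact (hmin u (by simp [hu, hu𝒞])).not_gt hus
      · exact hu𝒞 (h𝒞.2 hs ⟨hus, hu⟩)

end Colex

end Finset

section Lovasz

lemma exists_isInitSeg_card_shadow_le {n r : ℕ} {𝒜 : Finset (Finset (Fin n))}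
    (h𝒜 : (𝒜 : Set (Finset (Fin n))).Sized r) :
    ∃ ℬ : Finset (Finset (Fin n)), Colex.IsInitSeg ℬ r ∧ #ℬ = #𝒜 ∧ #(∂ ℬ) ≤ #(∂ 𝒜) := by
  obtain ⟨ℬ, hℬ, hcard⟩ :=
    Colex.exists_isInitSeg_card_eq (card_le_card h𝒜.subset_powersetCard_univ)
  exact ⟨ℬ, hℬ, hcard, kruskal_katona h𝒜 hcard.le hℬ⟩

/-- The numerical core of the induction step in `gchoose_le_card_shadow_fin`: `c`, `s` and `d`
are the sizes of the subfamily avoiding the least vertex, of its shadow, and of the link of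
that vertex. -/
lemma gchoose_sub_one_le_of_card_add {k c s d : ℕ} {z : ℝ} (hz : (k : ℝ) + 2 ≤ z)
    (h : gchoose z (k + 2) ≤ c + d) (hsd : s ≤ d)
    (hlov : ∀ z' : ℝ, (k : ℝ) + 2 ≤ z' → gchoose z' (k + 2) ≤ c → gchoose z' (k + 1) ≤ s) :
    gchoose (z - 1) (k + 1) ≤ d := by
  by_contra! hd
  have hmono := (gchoose_strictMonoOn (k := k + 1) k.succ_ne_zero).monotoneOn
  have hpascal := gchoose_succ_succ z (k + 1)
  have hc : gchoose (z - 1) (k + 2) < c := by linarith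
  have hc1 : (1 : ℝ) ≤ c :=
    Nat.one_le_cast.2 (Nat.cast_pos.1 ((gchoose_nonneg (by push_cast; linarith)).trans_lt hc))
  obtain ⟨z', hzz', hkz', hz'⟩ :
      ∃ z', z - 1 ≤ z' ∧ (k : ℝ) + 2 ≤ z' ∧ gchoose z' (k + 2) ≤ c := by
    rcases le_total ((k : ℝ) + 2) (z - 1) with hkz | hzk
    · exact ⟨z - 1, le_rfl, hkz, hc.le⟩
    · refine ⟨k + 2, hzk, le_rfl, ?_⟩
      rwa [show (k : ℝ) + 2 = ((k + 2 : ℕ) : ℝ) by push_cast; ring, gchoose_self]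
  have := hmono (by simp; linarith) (by simp; linarith) hzz'
  have := hlov z' hkz' hz'
  have : (s : ℝ) ≤ d := by exact_mod_cast hsd
  linarith

/-- Lovász's proof: replace `𝒜` by a colex initial segment `ℬ` of the same size (no larger shadow
by Kruskal–Katona). `ℬ` is shifted towards the least vertex `a`, so the shadow of its sets avoiding
`a` lies in the link of `a`; this forces the link to have at least `C(z-1, k+1)` members, and the
link together with its shadow, with `a` put back, fit disjointly into the shadow of `ℬ`. -/
theorem gchoose_le_card_shadow_fin {n : ℕ} (k : ℕ) {𝒜 : Finset (Finset (Fin n))}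
    (h𝒜 : (𝒜 : Set (Finset (Fin n))).Sized (k + 1)) {z : ℝ} (hz : (k : ℝ) + 1 ≤ z)
    (h : gchoose z (k + 1) ≤ #𝒜) : gchoose z k ≤ #(∂ 𝒜) := by
  induction k generalizing 𝒜 z with
  | zero =>
    rw [gchoose_one] at h
    obtain ⟨s, hs⟩ : 𝒜.Nonempty := card_pos.1 (by exact_mod_cast (by linarith : (0 : ℝ) < #𝒜))
    obtain ⟨a, rfl⟩ := card_eq_one.1 (h𝒜 hs)
    rw [gchoose_zero, Nat.one_le_cast, one_le_card]
    exact ⟨∅, by simpa using erase_mem_shadow hs (mem_singleton_self a)⟩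
  | succ k ih =>
    induction hN : #𝒜 using Nat.strong_induction_on generalizing 𝒜 z with
    | _ N ihN =>
    push_cast at hz
    obtain ⟨ℬ, hℬ, hcard, hsh⟩ := exists_isInitSeg_card_shadow_le h𝒜
    obtain ⟨s, hs⟩ : ℬ.Nonempty := card_pos.1 <| by
      rw [hcard]
      exact_mod_cast (gchoose_pos (by push_cast; linarith)).trans_le h
    obtain ⟨i, -⟩ := card_pos.1 (by rw [hℬ.1 hs]; omega)
    obtain ⟨a, ha⟩ : ∃ a : Fin n, ∀ b, a ≤ b :=
      ⟨⟨0, i.pos⟩, fun b => Fin.mk_le_of_le_val b.val.zero_le⟩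
    have hsplit := card_memberSubfamily_add_card_nonMemberSubfamily a ℬ
    have hlt : #(ℬ.nonMemberSubfamily a) < N := by
      have := (hℬ.memberSubfamily_nonempty ha ⟨s, hs⟩).card_pos
      omega
    have hlink : gchoose (z - 1) (k + 1) ≤ #(ℬ.memberSubfamily a) := by
      refine gchoose_sub_one_le_of_card_add (c := #(ℬ.nonMemberSubfamily a)) (by linarith) ?_
        (card_le_card (hℬ.shadow_nonMemberSubfamily_subset ha)) fun z' hz' h' => ?_
      · rw [← hcard, ← hsplit] at h
        push_cast at h ⊢
        linarith
      · exact ihN _ hlt (hℬ.1.mono (filter_subset _ _)) (by push_cast; linarith) h' rfl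
    have hlink_shadow := ih (hℬ.1.memberSubfamily a) (by linarith) hlink
    have hsum : (#(ℬ.memberSubfamily a) : ℝ) + #(∂ (ℬ.memberSubfamily a)) ≤ #(∂ 𝒜) := by
      exact_mod_cast card_memberSubfamily_add_card_shadow_le.trans hsh
    rw [gchoose_succ_succ z k]
    linarith

theorem gchoose_le_card_shadow {V : Type*} [Fintype V] [DecidableEq V] {k : ℕ}
    {𝒜 : Finset (Finset V)} (h𝒜 : (𝒜 : Set (Finset V)).Sized (k + 1)) {z : ℝ}
    (hz : (k : ℝ) + 1 ≤ z) (h : gchoose z (k + 1) ≤ #𝒜) : gchoose z k ≤ #(∂ 𝒜) := by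
  let e := (mapEmbedding (Fintype.equivFin V).toEmbedding).toEmbedding
  have hsized : ((𝒜.map e : Finset (Finset (Fin (Fintype.card V)))) :
      Set (Finset (Fin (Fintype.card V)))).Sized (k + 1) := by
    intro s hs
    obtain ⟨t, ht, rfl⟩ := mem_map.1 hs
    simpa [e] using h𝒜 ht
  have := gchoose_le_card_shadow_fin k hsized hz (by rwa [card_map])
  rwa [shadow_map, card_map] at this

lemma card_le_gchoose_of_card_shadow_eq {V : Type*} [Fintype V] [DecidableEq V] {k : ℕ}
    (hk : k ≠ 0) {𝒜 : Finset (Finset V)} (h𝒜 : (𝒜 : Set (Finset V)).Sized (k + 1)) {y : ℝ}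
    (hy : (k : ℝ) ≤ y) (hyd : gchoose y k = #(∂ 𝒜)) : (#𝒜 : ℝ) ≤ gchoose y (k + 1) := by
  by_contra! hlt
  obtain ⟨z, hz, hzd⟩ := exists_gchoose_eq k.succ_ne_zero (d := #𝒜)
    (Nat.one_le_cast.2 (Nat.cast_pos.1 ((gchoose_nonneg (by push_cast; linarith)).trans_lt hlt)))
  push_cast at hz
  have hyz : y < z := ((gchoose_strictMonoOn k.succ_ne_zero).lt_iff_lt
    (by simp; linarith) (by simp; linarith)).1 (hzd ▸ hlt)
  have := gchoose_le_card_shadow h𝒜 hz hzd.le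
  have := gchoose_strictMonoOn hk (by simp; linarith) (by simp; linarith) hyz
  linarith

theorem card_le_card_shadow_mul {V : Type*} [Fintype V] [DecidableEq V] {k : ℕ} (hk : k ≠ 0)
    {𝒜 : Finset (Finset V)} (h𝒜 : (𝒜 : Set (Finset V)).Sized (k + 1)) {t : ℝ}
    (ht : (k : ℝ) ≤ t) (h : #(∂ 𝒜) ≤ gchoose t k) :
    (#𝒜 : ℝ) ≤ #(∂ 𝒜) * (t - k) / (k + 1) := by
  rcases Nat.eq_zero_or_pos #(∂ 𝒜) with h0 | hpos
  · have : 𝒜 = ∅ := eq_empty_of_forall_notMem fun s hs => by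
      obtain ⟨b, hb⟩ := card_pos.1 (by rw [h𝒜 hs]; omega)
      exact notMem_empty _ (card_eq_zero.1 h0 ▸ erase_mem_shadow hs hb)
    simp [this]
  obtain ⟨y, hy, hyd⟩ := exists_gchoose_eq hk (d := #(∂ 𝒜)) (by exact_mod_cast hpos)
  have hyt : y ≤ t := ((gchoose_strictMonoOn hk).le_iff_le
    (by simp; linarith) (by simp; linarith)).1 (hyd ▸ h)
  rw [le_div_iff₀ (by positivity)]
  calc (#𝒜 : ℝ) * (k + 1) ≤ gchoose y (k + 1) * (k + 1) := by
        gcongr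
        exact card_le_gchoose_of_card_shadow_eq hk h𝒜 hy hyd
    _ = #(∂ 𝒜) * (y - k) := by rw [gchoose_succ_mul, hyd]
    _ ≤ #(∂ 𝒜) * (t - k) := by gcongr

end Lovasz

section Cliques

variable {V : Type*} [Fintype V] [DecidableEq V]

def cliqueFamily (r : ℕ) (G : Finset (Finset V)) (m : ℕ) : Finset (Finset V) :=
  (powersetCard m univ).filter fun T => ∀ S ∈ powersetCard r T, S ∈ G

lemma cliqueCount_eq_card_cliqueFamily (r : ℕ) (G : Finset (Finset V)) (m : ℕ) :
    cliqueCount r G m = #(cliqueFamily r G m) := rfl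

lemma sized_cliqueFamily (r : ℕ) (G : Finset (Finset V)) (m : ℕ) :
    (cliqueFamily r G m : Set (Finset V)).Sized m :=
  fun _ hT => (mem_powersetCard.1 (mem_filter.1 hT).1).2

lemma shadow_cliqueFamily_subset (r : ℕ) (G : Finset (Finset V)) :
    ∂ (cliqueFamily r G (r + 1)) ⊆ G := by
  intro S hS
  obtain ⟨T, hT, u, hu, rfl⟩ := mem_shadow_iff.1 hS
  refine (mem_filter.1 hT).2 _ (mem_powersetCard.2 ⟨erase_subset u T, ?_⟩)
  rw [card_erase_of_mem hu, sized_cliqueFamily r G _ hT, Nat.add_sub_cancel]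

lemma card_memberSubfamily_eq_deg (𝒜 : Finset (Finset V)) (v : V) :
    #(𝒜.memberSubfamily v) = deg 𝒜 v :=
  card_image_of_injOn ((erase_injOn' v).mono fun _ hs => (mem_filter.1 hs).2)

lemma sum_deg_eq {𝒜 : Finset (Finset V)} {r : ℕ} (h𝒜 : (𝒜 : Set (Finset V)).Sized r) :
    ∑ v, deg 𝒜 v = r * #𝒜 := by
  calc ∑ v, deg 𝒜 v = ∑ v, #(𝒜.bipartiteAbove (· ∈ ·) v) := rfl
    _ = ∑ s ∈ 𝒜, #((univ : Finset V).bipartiteBelow (· ∈ ·) s) :=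
      sum_card_bipartiteAbove_eq_sum_card_bipartiteBelow _
    _ = ∑ s ∈ 𝒜, r := sum_congr rfl fun s hs => by simp [bipartiteBelow, h𝒜 hs]
    _ = r * #𝒜 := by rw [sum_const, smul_eq_mul, mul_comm]

lemma deg_cliqueFamily_le_of_deg_le {k : ℕ} (hk : k ≠ 0) (G : Finset (Finset V)) (v : V)
    {t : ℝ} (ht : (k : ℝ) ≤ t) (hdeg : (deg G v : ℝ) ≤ gchoose t k) :
    (deg (cliqueFamily (k + 1) G (k + 2)) v : ℝ) ≤ deg G v * (t - k) / (k + 1) := by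
  set 𝒦 := cliqueFamily (k + 1) G (k + 2)
  have hsh : (#(∂ (𝒦.memberSubfamily v)) : ℝ) ≤ deg G v := by
    rw [← card_memberSubfamily_eq_deg]
    exact_mod_cast card_le_card (shadow_memberSubfamily_subset.trans
      (image_subset_image (filter_subset_filter _ (shadow_cliqueFamily_subset _ G))))
  rw [← card_memberSubfamily_eq_deg]
  calc _ ≤ #(∂ (𝒦.memberSubfamily v)) * (t - k) / (k + 1) :=
        card_le_card_shadow_mul hk ((sized_cliqueFamily _ G _).memberSubfamily v) ht
          (hsh.trans hdeg)
    _ ≤ _ := by gcongr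

lemma deg_cliqueFamily_le {k : ℕ} (hk : k ≠ 0) {G : Finset (Finset V)} {x : ℝ}
    (hx : (k : ℝ) + 1 ≤ x) (hcard : (#G : ℝ) = gchoose x (k + 1)) (v : V) :
    (deg (cliqueFamily (k + 1) G (k + 2)) v : ℝ) ≤ deg G v * (x - (k + 1)) / (k + 1) := by
  rcases le_or_gt (deg G v : ℝ) (gchoose (x - 1) k) with hle | hgt
  · have := deg_cliqueFamily_le_of_deg_le hk G v (by linarith) hle
    rwa [sub_sub, add_comm 1] at this
  have hlink : (deg (cliqueFamily (k + 1) G (k + 2)) v : ℝ) ≤ #G - deg G v := by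
    rw [← card_memberSubfamily_eq_deg, ← card_memberSubfamily_eq_deg,
      ← card_memberSubfamily_add_card_nonMemberSubfamily v G]
    push_cast
    have := card_le_card (memberSubfamily_subset_nonMemberSubfamily_shadow.trans
      (filter_subset_filter _ (shadow_cliqueFamily_subset (k + 1) G)) :
        (cliqueFamily (k + 1) G (k + 2)).memberSubfamily v ⊆ G.nonMemberSubfamily v)
    linarith [(Nat.cast_le (α := ℝ)).2 this]
  have hpascal := gchoose_succ_succ x k
  have hsucc := gchoose_succ_mul (x - 1) k
  have hprod : 0 ≤ ((deg G v : ℝ) - gchoose (x - 1) k) * (x - (k + 1)) :=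
    mul_nonneg (by linarith) (by linarith)
  rw [le_div_iff₀ (by positivity)]
  nlinarith

lemma card_cliqueFamily_le {k : ℕ} (hk : k ≠ 0) {G : Finset (Finset V)}
    (hG : (G : Set (Finset V)).Sized (k + 1)) {x t : ℝ} (hkt : (k : ℝ) ≤ t) (htx : t ≤ x - 1)
    (hcard : (#G : ℝ) = gchoose x (k + 1)) :
    (k + 2) * (#(cliqueFamily (k + 1) G (k + 2)) : ℝ) ≤ gchoose x (k + 1) * (x - (k + 1)) -
      (∑ v ∈ univ.filter fun v => (deg G v : ℝ) < gchoose t k, (deg G v : ℝ)) *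
        ((x - 1 - t) / (k + 1)) := by
  set 𝒦 := cliqueFamily (k + 1) G (k + 2)
  have hvertex : ∀ v, (deg 𝒦 v : ℝ) ≤ deg G v * ((x - (k + 1)) / (k + 1)) -
      (if (deg G v : ℝ) < gchoose t k then (deg G v : ℝ) else 0) * ((x - 1 - t) / (k + 1)) := by
    intro v
    split_ifs with hsmall
    · calc _ ≤ deg G v * (t - k) / (k + 1) := deg_cliqueFamily_le_of_deg_le hk G v hkt hsmall.le
        _ = _ := by ring
    · rw [zero_mul, sub_zero, ← mul_div_assoc]
      exact deg_cliqueFamily_le hk (by linarith) hcard v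
  have hsum𝒦 : ∑ v, (deg 𝒦 v : ℝ) = (k + 2) * #𝒦 := by
    exact_mod_cast sum_deg_eq (sized_cliqueFamily _ G _)
  have hsumG : ∑ v, (deg G v : ℝ) = (k + 1) * #G := by
    exact_mod_cast sum_deg_eq hG
  have := sum_le_sum fun v (_ : v ∈ univ) => hvertex v
  rw [sum_sub_distrib, ← sum_mul, ← sum_mul, ← sum_filter, hsum𝒦, hsumG, hcard] at this
  refine this.trans_eq (congrArg (· - _) ?_)
  field_simp

lemma sum_deg_le_of_card_cliqueFamily {k : ℕ} (hk : k ≠ 0) {G : Finset (Finset V)}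
    (hG : (G : Set (Finset V)).Sized (k + 1)) {x s : ℝ} (hs : 0 < s) (hx : (k : ℝ) + 2 ≤ x)
    (hkt : (k : ℝ) ≤ (1 - s) * (x - 1)) (hcard : (#G : ℝ) = gchoose x (k + 1))
    (hK : (1 - s ^ 2) * gchoose x (k + 2) < #(cliqueFamily (k + 1) G (k + 2))) :
    ∑ v ∈ univ.filter fun v => (deg G v : ℝ) < gchoose ((1 - s) * (x - 1)) k, (deg G v : ℝ) ≤
      s * x * gchoose (x - 1) k := by
  set D := ∑ v ∈ univ.filter fun v => (deg G v : ℝ) < gchoose ((1 - s) * (x - 1)) k,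
    (deg G v : ℝ)
  have hx0 : 0 < x - 1 := by linarith
  have hbound := card_cliqueFamily_le hk hG hkt (by nlinarith) hcard
  rw [show x - 1 - (1 - s) * (x - 1) = s * (x - 1) by ring, ← mul_div_assoc] at hbound
  have hP := gchoose_succ_mul x (k + 1)
  push_cast at hP
  have hloss : D * (s * (x - 1)) / (k + 1) < s ^ 2 * (gchoose x (k + 1) * (x - (k + 1))) := by
    have hKP := (mul_lt_mul_of_pos_left hK (by positivity : (0 : ℝ) < k + 2)).trans_le hbound
    have hsP : s ^ 2 * (gchoose x (k + 1 + 1) * (k + 1 + 1)) =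
        s ^ 2 * (gchoose x (k + 1) * (x - (k + 1))) := by rw [hP]
    linarith
  rw [div_lt_iff₀ (by positivity)] at hloss
  have hxA : 0 ≤ s ^ 2 * (x * gchoose (x - 1) k) :=
    mul_nonneg (sq_nonneg s) (mul_nonneg (by linarith) (gchoose_nonneg (by linarith)))
  have hlt : D * (s * (x - 1)) < (s * x * gchoose (x - 1) k) * (s * (x - 1)) :=
    calc D * (s * (x - 1)) < s ^ 2 * (gchoose x (k + 1) * (x - (k + 1))) * (k + 1) := hloss
      _ = s ^ 2 * (x * gchoose (x - 1) k) * (x - (k + 1)) := by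
        linear_combination s ^ 2 * (x - (k + 1)) * gchoose_succ_mul' x k
      _ ≤ s ^ 2 * (x * gchoose (x - 1) k) * (x - 1) := by gcongr; linarith
      _ = _ := by ring
  exact (lt_of_mul_lt_mul_right hlt (mul_pos hs hx0).le).le

end Cliques

lemma le_one_sub_mul_sub_one {k : ℕ} {ε x s : ℝ} (hε0 : 0 < ε) (hε1 : ε < 1 / 2)
    (hx : (1 + ε) * (k + 2) ≤ x) (hs : s < ε / (6 * (k + 1))) :
    (k : ℝ) ≤ (1 - s) * (x - 1) := by
  have hx1 : (k : ℝ) + 2 ≤ x := by nlinarith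
  have : ε / (6 * (k + 1)) * (x - 1) ≤ x - (k + 1) := by
    rw [div_mul_eq_mul_div, div_le_iff₀ (by positivity)]
    nlinarith
  nlinarith

/-- Quantitative stability for the Kruskal–Katona theorem, part (3): the sum of the
degrees of the vertices of degree less than `C((1-δ^{1/2})(x-1), r-1)` is at most
`δ^{1/2}·x·C(x-1,r-1)`. -/
theorem stmt8 {V : Type*} [Fintype V] [DecidableEq V] (ε : ℝ) (hε0 : 0 < ε)
    (hε1 : ε < 1 / 2) (r : ℕ) (hr : 2 ≤ r) (x : ℝ) (hx : (1 + ε) * (r + 1) ≤ x)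
    (δ : ℝ) (hδ0 : 0 < δ) (hδ : δ < (ε / (6 * r)) ^ 2)
    (G : Finset (Finset V)) (hG : ∀ e ∈ G, e.card = r)
    (hcard : (G.card : ℝ) = gchoose x r)
    (hK : (1 - δ) * gchoose x (r + 1) < (cliqueCount r G (r + 1) : ℝ)) :
    (∑ v ∈ ((Finset.univ : Finset V).filter fun v =>
        (deg G v : ℝ) < gchoose ((1 - Real.sqrt δ) * (x - 1)) (r - 1)),
      (deg G v : ℝ)) ≤ Real.sqrt δ * x * gchoose (x - 1) (r - 1) := by
  obtain ⟨k, rfl⟩ : ∃ k, r = k + 1 := ⟨r - 1, by omega⟩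
  rw [Nat.add_sub_cancel]
  push_cast at hx hδ hcard
  have hs : 0 < Real.sqrt δ := Real.sqrt_pos.2 hδ0
  have hsε : Real.sqrt δ < ε / (6 * (k + 1)) := (Real.sqrt_lt' (by positivity)).2 hδ
  rw [cliqueCount_eq_card_cliqueFamily, ← Real.sq_sqrt hδ0.le] at hK
  exact sum_deg_le_of_card_cliqueFamily (by omega) (fun e he => hG e he) hs (by nlinarith)
    (le_one_sub_mul_sub_one hε0 hε1 (by linarith) hsε) hcard hK
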